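/- arXiv:2407.08637 — 2 statements merged into one kernel-verified Lean document; each statement's English description precedes it below -/
import Mathlib

section
/- There is an absolute constant c > 0 such that the following holds. Let δ ∈ (0,1] and let N, N' ∈ ℕ satisfy N' ≥ δ^{−1/2}·N and N ≥ δ^{−1}. If f : ℤ → ℂ is a 1-bounded function supported on [N] with ‖f‖_{[±N']}² ≥ δN, then |∑_{x∈ℤ} f(x)| ≥ c·δ^{1/4}·N. -/
open Finset

noncomputable section

/-- `[N] = {0, 1, ..., N-1}` as a finset of integers. -/
def I0 (N : ℤ) : Finset ℤ := Finset.Ico 0 N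

/-- `[±N] = {-N+1, ..., N-1}` as a finset of integers. -/
def Ipm (N : ℤ) : Finset ℤ := Finset.Ioo (-N) N

def Bounded1 {α : Type*} (f : α → ℂ) : Prop := ∀ x, ‖f x‖ ≤ 1

/-- Iterated complex conjugation `𝒞^n`. -/
def conjIter (n : ℕ) (z : ℂ) : ℂ := if Even n then z else (starRingEnd ℂ) z

/-- The `2^s`-th power of the box norm of `f` along the finsets `E 0, ..., E (s-1)`. -/
def boxPow {G : Type*} [AddCommGroup G] {s : ℕ} (E : Fin s → Finset G) (f : G → ℂ) : ℂ :=
  (∑ h ∈ Fintype.piFinset E, ∑ h' ∈ Fintype.piFinset E,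
      ∑' x : G, ∏ ε : Fin s → Bool,
        conjIter (Finset.univ.filter (fun i => ε i)).card
          (f (x + ∑ i, if ε i then h' i else h i)))
    / ((∏ i, ((E i).card : ℂ)) ^ 2)

/-!
With `P = [±N']` and `m = |P| = 2N' - 1`, the box norm is
`‖f‖_P² = m⁻² ∑ₓ |∑_{h ∈ P} f(x + h)|²`.
As `N ≤ N'`, the window `x + P` contains all of `[N]` for the `2N' - N ≤ m` points
`x ∈ [N - N', N')`, where the window sum is `S = ∑ f`. Every other `x` with a nonzero window sum
is among the first or last `N` points of `[-N', N + N')`, and the point `k` steps in from either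
end sees at most `k` points of `[N]`; together they contribute at most `2 ∑_{k<N} k² ≤ 2N³/3`.
Hence `δ N m² ≤ m |S|² + 2N³/3`, and as `√δ m ≥ N` this forces `|S|² ≥ √δ N² / 4`.
-/

open ComplexConjugate

lemma sum_piFinset_fin_one {α M : Type*} [AddCommMonoid M] (E : Finset α)
    (g : (Fin 1 → α) → M) :
    ∑ h ∈ Fintype.piFinset (fun _ : Fin 1 => E), g h = ∑ a ∈ E, g (fun _ => a) := by
  apply Finset.sum_nbij' (fun h => h 0) (fun a _ => a)
  · exact fun h hh => Fintype.mem_piFinset.1 hh 0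
  · exact fun a ha => Fintype.mem_piFinset.2 fun _ => ha
  · exact fun h _ => funext fun i => by rw [Fin.eq_zero i]
  · exact fun a _ => rfl
  · exact fun h _ => congrArg g (funext fun i => by rw [Fin.eq_zero i])

lemma prod_conjIter_fin_one {G : Type*} [AddCommGroup G] (f : G → ℂ) (h h' : Fin 1 → G)
    (x : G) :
    ∏ ε : Fin 1 → Bool, conjIter #{i | ε i} (f (x + ∑ i, if ε i then h' i else h i))
      = f (x + h 0) * conj (f (x + h' 0)) := by
  rw [← (Equiv.funUnique (Fin 1) Bool).symm.prod_comp, Fintype.prod_bool]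
  simp [conjIter, Equiv.funUnique, mul_comm]

lemma boxPow_fin_one {G : Type*} [AddCommGroup G] (E : Finset G) (f : G → ℂ) :
    boxPow (fun _ : Fin 1 => E) f
      = (∑ h ∈ E, ∑ h' ∈ E, ∑' x, f (x + h) * conj (f (x + h'))) / (#E : ℂ) ^ 2 := by
  simp only [boxPow, prod_conjIter_fin_one, sum_piFinset_fin_one, Fin.prod_univ_one]

lemma sum_sum_tsum_mul_conj {G : Type*} [AddCommGroup G] (E : Finset G) {f : G → ℂ}
    (hf : f.HasFiniteSupport) :
    ∑ h ∈ E, ∑ h' ∈ E, ∑' x, f (x + h) * conj (f (x + h'))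
      = ∑' x, (Complex.normSq (∑ h ∈ E, f (x + h)) : ℂ) := by
  have hshift : ∀ h : G, (fun x => f (x + h)).HasFiniteSupport := fun h =>
    hf.preimage (add_left_injective h).injOn
  have hsum : ∀ h h' : G, Summable fun x => f (x + h) * conj (f (x + h')) := fun h h' =>
    summable_of_hasFiniteSupport ((hshift h).fun_mul_left _)
  simp_rw [← Complex.mul_conj, map_sum, Finset.sum_mul_sum]
  rw [Summable.tsum_finsetSum fun h _ => summable_sum fun h' _ => hsum h h']
  exact Finset.sum_congr rfl fun h _ => (Summable.tsum_finsetSum fun h' _ => hsum h h').symm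

lemma boxPow_fin_one_of_hasFiniteSupport {G : Type*} [AddCommGroup G] (E : Finset G) {f : G → ℂ}
    (hf : f.HasFiniteSupport) :
    boxPow (fun _ : Fin 1 => E) f
      = (((∑' x, Complex.normSq (∑ h ∈ E, f (x + h))) / (#E : ℝ) ^ 2 : ℝ) : ℂ) := by
  rw [boxPow_fin_one, sum_sum_tsum_mul_conj E hf]
  push_cast [Complex.ofReal_tsum]
  rfl

lemma sum_range_sq_le (n : ℕ) : ∑ k ∈ range n, (k : ℝ) ^ 2 ≤ n ^ 3 / 3 := by
  induction n with
  | zero => simp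
  | succ n ih =>
    rw [sum_range_succ]
    push_cast
    nlinarith [n.cast_nonneg (α := ℝ)]

lemma sum_sq_le_of_injOn {α : Type*} {s : Finset α} {g : α → ℕ} {n : ℕ} (hg : Set.InjOn g s)
    (hlt : ∀ x ∈ s, g x < n) : ∑ x ∈ s, (g x : ℝ) ^ 2 ≤ n ^ 3 / 3 := by
  rw [← Finset.sum_image (f := fun k : ℕ => (k : ℝ) ^ 2) hg]
  refine le_trans ?_ (sum_range_sq_le n)
  exact sum_le_sum_of_subset_of_nonneg
    (fun k hk => by obtain ⟨x, hx, rfl⟩ := mem_image.1 hk; exact mem_range.2 (hlt x hx))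
    fun _ _ _ => by positivity

lemma norm_sum_le_card_inter {α : Type*} [DecidableEq α] {f : α → ℂ} {s : Finset α}
    (hf : Bounded1 f) (hs : ∀ x, f x ≠ 0 → x ∈ s) (W : Finset α) :
    ‖∑ y ∈ W, f y‖ ≤ #(W ∩ s) := by
  rw [← sum_subset inter_subset_left fun y hyW hy => not_not.1 fun hfy =>
    hy (mem_inter.2 ⟨hyW, hs y hfy⟩)]
  calc ‖∑ y ∈ W ∩ s, f y‖ ≤ ∑ y ∈ W ∩ s, ‖f y‖ := norm_sum_le _ _
    _ ≤ ∑ y ∈ W ∩ s, 1 := sum_le_sum fun y _ => hf y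
    _ = #(W ∩ s) := by simp

lemma sum_Ipm_add (f : ℤ → ℂ) (n x : ℤ) :
    ∑ h ∈ Ipm n, f (x + h) = ∑ y ∈ Ioo (x - n) (x + n), f y := by
  rw [sub_eq_add_neg, ← map_add_left_Ioo, sum_map]
  rfl

lemma card_Ipm (n : ℕ) : #(Ipm n) = 2 * n - 1 := by
  rw [Ipm, Int.card_Ioo]
  omega

section Window

variable {f : ℤ → ℂ} {N N' : ℕ}

lemma norm_sum_Ipm_add_le_left (hf : Bounded1 f) (hs : ∀ x, f x ≠ 0 → x ∈ I0 N) (x : ℤ) :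
    ‖∑ h ∈ Ipm N', f (x + h)‖ ≤ (x + N').toNat := by
  rw [sum_Ipm_add]
  refine (norm_sum_le_card_inter hf hs _).trans ?_
  have hsub : Ioo (x - N') (x + N') ∩ I0 N ⊆ Ico 0 (x + N') := fun y hy => by
    simp only [mem_inter, mem_Ioo, I0, mem_Ico] at hy ⊢
    omega
  have hcard := (card_le_card hsub).trans (Int.card_Ico _ _).le
  rw [sub_zero] at hcard
  exact_mod_cast hcard

lemma norm_sum_Ipm_add_le_right (hf : Bounded1 f) (hs : ∀ x, f x ≠ 0 → x ∈ I0 N) (x : ℤ) :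
    ‖∑ h ∈ Ipm N', f (x + h)‖ ≤ (N + N' - 1 - x).toNat := by
  rw [sum_Ipm_add]
  refine (norm_sum_le_card_inter hf hs _).trans ?_
  have hsub : Ioo (x - N') (x + N') ∩ I0 N ⊆ Ioo (x - N') N := fun y hy => by
    simp only [mem_inter, mem_Ioo, I0, mem_Ico] at hy ⊢
    omega
  have hcard := (card_le_card hsub).trans (Int.card_Ioo _ _).le
  rw [show (N : ℤ) - (x - N') - 1 = N + N' - 1 - x by ring] at hcard
  exact_mod_cast hcard

lemma sum_Ipm_add_of_mem_Ico (hs : ∀ x, f x ≠ 0 → x ∈ I0 N) {x : ℤ}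
    (hx : x ∈ Ico (N - N' : ℤ) N') :
    ∑ h ∈ Ipm N', f (x + h) = ∑ y ∈ I0 N, f y := by
  rw [sum_Ipm_add]
  refine (sum_subset (fun y hy => ?_) fun y _ hy => not_not.1 fun hfy => hy (hs y hfy)).symm
  simp only [I0, mem_Ico, mem_Ioo] at hx hy ⊢
  omega

lemma sum_Ipm_add_eq_zero_of_notMem_Ico (hf : Bounded1 f) (hs : ∀ x, f x ≠ 0 → x ∈ I0 N)
    {x : ℤ} (hx : x ∉ Ico (-N' : ℤ) (N + N')) : ∑ h ∈ Ipm N', f (x + h) = 0 := by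
  rw [mem_Ico, not_and_or, not_le, not_lt] at hx
  refine norm_le_zero_iff.1 ?_
  rcases hx with hx | hx
  · simpa [Int.toNat_of_nonpos (by omega : x + N' ≤ 0)]
      using norm_sum_Ipm_add_le_left (N' := N') hf hs x
  · simpa [Int.toNat_of_nonpos (by omega : (N : ℤ) + N' - 1 - x ≤ 0)]
      using norm_sum_Ipm_add_le_right (N' := N') hf hs x

lemma sum_Ico_left_normSq_sum_Ipm_add_le (hf : Bounded1 f) (hs : ∀ x, f x ≠ 0 → x ∈ I0 N) :
    ∑ x ∈ Ico (-N' : ℤ) (N - N'), Complex.normSq (∑ h ∈ Ipm N', f (x + h))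
      ≤ N ^ 3 / 3 := by
  refine (sum_le_sum fun x _ => ?_).trans
    (sum_sq_le_of_injOn (g := fun x : ℤ => (x + N').toNat) ?_ fun x hx => ?_)
  · rw [Complex.normSq_eq_norm_sq]
    exact pow_le_pow_left₀ (norm_nonneg _) (norm_sum_Ipm_add_le_left hf hs x) 2
  · intro x hx y hy hxy
    simp only [coe_Ico, Set.mem_Ico] at hx hy hxy
    omega
  · rw [mem_Ico] at hx
    omega

lemma sum_Ico_right_normSq_sum_Ipm_add_le (hf : Bounded1 f) (hs : ∀ x, f x ≠ 0 → x ∈ I0 N) :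
    ∑ x ∈ Ico (N' : ℤ) (N + N'), Complex.normSq (∑ h ∈ Ipm N', f (x + h))
      ≤ N ^ 3 / 3 := by
  refine (sum_le_sum fun x _ => ?_).trans
    (sum_sq_le_of_injOn (g := fun x : ℤ => (N + N' - 1 - x).toNat) ?_ fun x hx => ?_)
  · rw [Complex.normSq_eq_norm_sq]
    exact pow_le_pow_left₀ (norm_nonneg _) (norm_sum_Ipm_add_le_right hf hs x) 2
  · intro x hx y hy hxy
    simp only [coe_Ico, Set.mem_Ico] at hx hy hxy
    omega
  · rw [mem_Ico] at hx
    omega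

lemma sum_Ico_middle_normSq_sum_Ipm_add (hs : ∀ x, f x ≠ 0 → x ∈ I0 N) (hNN' : N ≤ N') :
    ∑ x ∈ Ico (N - N' : ℤ) N', Complex.normSq (∑ h ∈ Ipm N', f (x + h))
      = (2 * N' - N : ℝ) * ‖∑ y ∈ I0 N, f y‖ ^ 2 := by
  rw [sum_congr rfl fun x hx => congrArg Complex.normSq (sum_Ipm_add_of_mem_Ico hs hx), sum_const,
    Int.card_Ico, nsmul_eq_mul, Complex.normSq_eq_norm_sq]
  congr 1
  rw [show (N' : ℤ) - (N - N') = ((2 * N' - N : ℕ) : ℤ) by omega, Int.toNat_natCast,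
    Nat.cast_sub (by omega)]
  push_cast
  ring

lemma tsum_normSq_sum_Ipm_add_le (hf : Bounded1 f) (hs : ∀ x, f x ≠ 0 → x ∈ I0 N)
    (hNN' : N ≤ N') :
    ∑' x : ℤ, Complex.normSq (∑ h ∈ Ipm N', f (x + h))
      ≤ (2 * N' - N : ℝ) * ‖∑ y ∈ I0 N, f y‖ ^ 2 + 2 / 3 * N ^ 3 := by
  rw [tsum_eq_sum fun x hx => by rw [sum_Ipm_add_eq_zero_of_notMem_Ico hf hs hx, map_zero],
    ← Ico_union_Ico_eq_Ico (a := -(N' : ℤ)) (b := N - N') (c := N + N') (by omega) (by omega),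
    sum_union (Ico_disjoint_Ico_consecutive _ _ _),
    ← Ico_union_Ico_eq_Ico (a := (N - N' : ℤ)) (b := N') (c := N + N') (by omega) (by omega),
    sum_union (Ico_disjoint_Ico_consecutive _ _ _), sum_Ico_middle_normSq_sum_Ipm_add hs hNN']
  linarith [sum_Ico_left_normSq_sum_Ipm_add_le (N' := N') hf hs,
    sum_Ico_right_normSq_sum_Ipm_add_le (N' := N') hf hs]

end Window

lemma quarter_mul_sq_le_sq {p N m s : ℝ} (hm : 0 < m) (hN : 0 ≤ N) (hpm : N ≤ p * m)
    (h : p ^ 2 * N * m ^ 2 ≤ m * s ^ 2 + 2 / 3 * N ^ 3) : p * N ^ 2 / 4 ≤ s ^ 2 := by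
  have hq : N * (p * m) ≤ (p * m) ^ 2 := by nlinarith
  have hN2 : N ^ 2 ≤ (p * m) ^ 2 := by nlinarith
  refine le_of_mul_le_mul_left ?_ hm
  nlinarith [mul_le_mul_of_nonneg_left hq hN, mul_le_mul_of_nonneg_left hN2 hN]

/-- the one-dimensional `U¹` inverse theorem. -/
theorem stmt12 :
    ∃ c : ℝ, 0 < c ∧
      ∀ δ : ℝ, 0 < δ → δ ≤ 1 →
      ∀ N N' : ℕ, δ ^ (-(1 : ℝ) / 2) * (N : ℝ) ≤ (N' : ℝ) → δ⁻¹ ≤ (N : ℝ) →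
      ∀ f : ℤ → ℂ, Bounded1 f → (∀ x : ℤ, f x ≠ 0 → x ∈ I0 (N : ℤ)) →
        δ * (N : ℝ) ≤ (boxPow (fun _ : Fin 1 => Ipm (N' : ℤ)) f).re →
        c * δ ^ ((1 : ℝ) / 4) * (N : ℝ) ≤ ‖∑' x : ℤ, f x‖ := by
  refine ⟨1 / 2, by norm_num, fun δ hδ hδ1 N N' hN' hN f hf hs hbox => ?_⟩
  set u := δ ^ ((1 : ℝ) / 4)
  have hδ_half : δ ^ ((1 : ℝ) / 2) = u ^ 2 := by
    rw [← Real.rpow_natCast, ← Real.rpow_mul hδ.le]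
    norm_num
  have hδ_eq : δ = (u ^ 2) ^ 2 := by
    rw [← hδ_half, ← Real.rpow_natCast, ← Real.rpow_mul hδ.le]
    norm_num
  have hu1 : u ^ 2 ≤ 1 := hδ_half ▸ Real.rpow_le_one hδ.le hδ1 (by norm_num)
  have hN1 : (1 : ℝ) ≤ N := ((one_le_inv₀ hδ).2 hδ1).trans hN
  have hNN' : (N : ℝ) ≤ u ^ 2 * N' := by
    rwa [neg_div, Real.rpow_neg hδ.le, hδ_half, inv_mul_le_iff₀ (by positivity)] at hN'
  have hN_le_N' : (N : ℝ) ≤ N' := hNN'.trans (mul_le_of_le_one_left (by positivity) hu1)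
  have hcard : (#(Ipm N') : ℝ) = 2 * N' - 1 := by
    rw [card_Ipm, Nat.cast_sub (by exact_mod_cast (by linarith : (1 : ℝ) ≤ 2 * N'))]
    push_cast
    ring
  rw [boxPow_fin_one_of_hasFiniteSupport _ ((I0 N).finite_toSet.subset hs), Complex.ofReal_re,
    hcard, le_div_iff₀ (by nlinarith), hδ_eq] at hbox
  have hbound := tsum_normSq_sum_Ipm_add_le hf hs (by exact_mod_cast hN_le_N')
  rw [tsum_eq_sum fun x hx => not_not.1 fun hfx => hx (hs x hfx)]
  set s := ‖∑ x ∈ I0 N, f x‖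
  have hsq : u ^ 2 * N ^ 2 / 4 ≤ s ^ 2 := by
    refine quarter_mul_sq_le_sq (m := 2 * N' - 1) (by linarith) (by linarith) (by linarith) ?_
    nlinarith [mul_le_mul_of_nonneg_right (by linarith : (2 * N' - N : ℝ) ≤ 2 * N' - 1)
      (sq_nonneg s)]
  rw [← sq_le_sq₀ (by positivity) (norm_nonneg _)]
  linarith
end
end

section
/- For every D ∈ ℕ there is a constant C_D > 0 such that the following holds. Let Q, T ∈ ℕ, let R ∈ ℝ[z] be a polynomial of degree at most D, and let a, b ∈ ℤ with |a| ≤ QT and 0 < |b| ≤ Q. Let R̃(z) := R(a + bz). Then ‖b^D·R‖_{C^∞[T]} ≤ C_D · Q^{D−1} · ‖R̃‖_{C^∞[T]}, where b^D·R denotes the polynomial R with all coefficients multiplied by b^D. -/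
/-!
Inverting the substitution gives `b ^ D * R(x) = ∑ₖ R̃ₖ b ^ (D - k) (x - a) ^ k`, so the `j`-th
coefficient of `b ^ D * R` is an integer combination `∑ₖ cₖ R̃ₖ` with
`cₖ = (k choose j) (-a) ^ (k - j) b ^ (D - k)`, and `T ^ j |cₖ| ≤ 2 ^ D Q ^ (D - 1) T ^ k`.
Since `‖x + y‖_{ℝ/ℤ} ≤ ‖x‖_{ℝ/ℤ} + ‖y‖_{ℝ/ℤ}` and `‖n x‖_{ℝ/ℤ} ≤ |n| ‖x‖_{ℝ/ℤ}` for `n ∈ ℤ`,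
each term contributes at most `2 ^ D Q ^ (D - 1) ‖R̃‖_{C^∞[T]}`.
-/

open Polynomial

noncomputable section

/-- The distance from a real number to the nearest integer, `‖x‖_{ℝ/ℤ}`. -/
def dInt (x : ℝ) : ℝ := |x - round x|

/-- `SmoothBdd D T p Q` says that the smoothness norm
`‖p‖_{C^∞[T]} = max_{1 ≤ j ≤ D} T^j ‖p_j‖_{ℝ/ℤ}` is at most `Q`. -/
def SmoothBdd (D : ℕ) (T : ℝ) (p : Polynomial ℝ) (Q : ℝ) : Prop :=
  ∀ j : ℕ, 1 ≤ j → j ≤ D → T ^ j * dInt (p.coeff j) ≤ Q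

open Finset

lemma dInt_nonneg (x : ℝ) : 0 ≤ dInt x := abs_nonneg _

lemma dInt_add_le (x y : ℝ) : dInt (x + y) ≤ dInt x + dInt y :=
  calc dInt (x + y) ≤ |x + y - ((round x + round y : ℤ) : ℝ)| := round_le _ _
    _ = |(x - round x) + (y - round y)| := by push_cast; ring_nf
    _ ≤ dInt x + dInt y := abs_add_le _ _

lemma dInt_intCast_mul_le (n : ℤ) (x : ℝ) : dInt (n * x) ≤ |(n : ℝ)| * dInt x :=
  calc dInt (n * x) ≤ |n * x - ((n * round x : ℤ) : ℝ)| := round_le _ _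
    _ = |(n : ℝ)| * dInt x := by rw [Int.cast_mul, ← mul_sub, abs_mul, dInt]

lemma dInt_sum_le {ι : Type*} (s : Finset ι) (f : ι → ℝ) :
    dInt (∑ i ∈ s, f i) ≤ ∑ i ∈ s, dInt (f i) :=
  Finset.le_sum_of_subadditive dInt (by simp [dInt]) dInt_add_le s f

lemma SmoothBdd.nonneg {D : ℕ} {T : ℝ} {p : ℝ[X]} {M : ℝ} (h : SmoothBdd D T p M) (hD : 1 ≤ D)
    (hT : 0 ≤ T) : 0 ≤ M :=
  (mul_nonneg (pow_nonneg hT 1) (dInt_nonneg _)).trans (h 1 le_rfl hD)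

section Affine

variable {K : Type*} [Field K]

lemma natDegree_comp_affine_le (p : K[X]) (a b : K) :
    (p.comp (C a + C b * X)).natDegree ≤ p.natDegree := by
  refine natDegree_comp_le.trans (mul_le_of_le_one_right (Nat.zero_le _) ?_)
  rw [add_comm]
  exact natDegree_linear_le

lemma comp_affine_comp_inv (p : K[X]) (a : K) {b : K} (hb : b ≠ 0) :
    (p.comp (C a + C b * X)).comp (C b⁻¹ * (X - C a)) = p := by
  have : (C a + C b * X).comp (C b⁻¹ * (X - C a)) = X := by
    rw [add_comp, C_comp, mul_comp, C_comp, X_comp, ← mul_assoc, ← C_mul, mul_inv_cancel₀ hb,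
      C_1, one_mul, add_sub_cancel]
  rw [comp_assoc, this, comp_X]

lemma pow_mul_coeff_eq_sum_coeff_comp_affine {p : K[X]} {D : ℕ} (hp : p.natDegree ≤ D)
    (a : K) {b : K} (hb : b ≠ 0) (j : ℕ) :
    b ^ D * p.coeff j = ∑ k ∈ range (D + 1),
      (k.choose j * (-a) ^ (k - j) * b ^ (D - k)) * (p.comp (C a + C b * X)).coeff k := by
  set q := p.comp (C a + C b * X)
  have hq : q.natDegree < D + 1 := (natDegree_comp_affine_le p a b).trans_lt (by omega)
  conv_lhs => rw [← comp_affine_comp_inv p a hb, comp, eval₂_eq_sum_range' C hq]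
  rw [finsetSum_coeff, mul_sum]
  refine sum_congr rfl fun k hk => ?_
  rw [mul_pow, ← C_pow, ← mul_assoc, ← C_mul, coeff_C_mul, sub_eq_add_neg, ← C_neg,
    coeff_X_add_C_pow, pow_sub₀ b hb (by simpa [Nat.lt_succ_iff] using hk), inv_pow]
  ring

end Affine

lemma abs_choose_mul_pow_mul_pow_le {a b Q T : ℝ} {D j k : ℕ} (hjk : j ≤ k) (hkD : k ≤ D)
    (hj : 1 ≤ j) (hQ : 1 ≤ Q) (hT : 0 ≤ T) (ha : |a| ≤ Q * T) (hb : |b| ≤ Q) :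
    T ^ j * |k.choose j * (-a) ^ (k - j) * b ^ (D - k)| ≤ 2 ^ D * Q ^ (D - 1) * T ^ k := by
  have hchoose : (k.choose j : ℝ) ≤ 2 ^ D := by
    exact_mod_cast (Nat.choose_le_two_pow k j).trans (Nat.pow_le_pow_right two_pos hkD)
  calc T ^ j * |k.choose j * (-a) ^ (k - j) * b ^ (D - k)|
      = k.choose j * |a| ^ (k - j) * |b| ^ (D - k) * T ^ j := by
        rw [abs_mul, abs_mul, abs_pow, abs_pow, abs_neg, Nat.abs_cast]; ring
    _ ≤ 2 ^ D * (Q * T) ^ (k - j) * Q ^ (D - k) * T ^ j := by gcongr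
    _ = 2 ^ D * Q ^ (D - j) * T ^ k := by
        rw [mul_pow, ← pow_sub_mul_pow T hjk, show D - j = k - j + (D - k) by omega, pow_add]
        ring
    _ ≤ 2 ^ D * Q ^ (D - 1) * T ^ k := by gcongr

lemma pow_mul_dInt_choose_mul_coeff_le {D j k : ℕ} {Q T M : ℝ} {p : ℝ[X]}
    (hp : SmoothBdd D T p M) (hM : 0 ≤ M) (hj : 1 ≤ j) (hkD : k ≤ D) (hQ : 1 ≤ Q) (hT : 0 ≤ T)
    {a b : ℤ} (ha : |(a : ℝ)| ≤ Q * T) (hb : |(b : ℝ)| ≤ Q) :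
    T ^ j * dInt (k.choose j * (-(a : ℝ)) ^ (k - j) * (b : ℝ) ^ (D - k) * p.coeff k)
      ≤ 2 ^ D * Q ^ (D - 1) * M := by
  obtain hkj | hjk := lt_or_ge k j
  · simp only [Nat.choose_eq_zero_of_lt hkj, Nat.cast_zero, zero_mul, dInt, round_zero,
      Int.cast_zero, sub_zero, abs_zero, mul_zero]
    positivity
  have hint := dInt_intCast_mul_le (k.choose j * (-a) ^ (k - j) * b ^ (D - k)) (p.coeff k)
  push_cast at hint
  calc _ ≤ T ^ j * (|k.choose j * (-(a : ℝ)) ^ (k - j) * (b : ℝ) ^ (D - k)|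
        * dInt (p.coeff k)) := mul_le_mul_of_nonneg_left hint (by positivity)
    _ ≤ 2 ^ D * Q ^ (D - 1) * T ^ k * dInt (p.coeff k) := by
        rw [← mul_assoc]
        exact mul_le_mul_of_nonneg_right
          (abs_choose_mul_pow_mul_pow_le hjk hkD hj hQ hT ha hb) (dInt_nonneg _)
    _ ≤ 2 ^ D * Q ^ (D - 1) * M := by
        rw [mul_assoc]
        exact mul_le_mul_of_nonneg_left (hp k (hj.trans hjk) hkD) (by positivity)

/-- smoothness norms under affine substitution. -/
theorem stmt17 (D : ℕ) :
    ∃ C₀ : ℝ, 0 < C₀ ∧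
      ∀ Q T : ℕ, 1 ≤ Q → 1 ≤ T →
      ∀ R : Polynomial ℝ, R.natDegree ≤ D →
      ∀ a b : ℤ, |a| ≤ (Q : ℤ) * (T : ℤ) → b ≠ 0 → |b| ≤ (Q : ℤ) →
      ∀ M : ℝ,
        SmoothBdd D (T : ℝ) (R.comp (Polynomial.C (a : ℝ) + Polynomial.C (b : ℝ) * X)) M →
        SmoothBdd D (T : ℝ) (Polynomial.C ((b : ℝ) ^ D) * R)
          (C₀ * (Q : ℝ) ^ ((D : ℤ) - 1) * M) := by
  refine ⟨(D + 1) * 2 ^ D, by positivity, ?_⟩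
  intro Q T hQ _ R hR a b ha hb0 hb M hM j hj hjD
  have hM0 : 0 ≤ M := hM.nonneg (hj.trans hjD) T.cast_nonneg
  have haR : |(a : ℝ)| ≤ Q * T := by rw [← Int.cast_abs]; exact_mod_cast ha
  have hbR : |(b : ℝ)| ≤ Q := by rw [← Int.cast_abs]; exact_mod_cast hb
  rw [coeff_C_mul, pow_mul_coeff_eq_sum_coeff_comp_affine hR _ (Int.cast_ne_zero.mpr hb0),
    show (D : ℤ) - 1 = (D - 1 : ℕ) by omega, zpow_natCast]
  calc _ ≤ (T : ℝ) ^ j * ∑ k ∈ range (D + 1), dInt (k.choose j * (-(a : ℝ)) ^ (k - j)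
          * (b : ℝ) ^ (D - k) * (R.comp (C (a : ℝ) + C (b : ℝ) * X)).coeff k) :=
        mul_le_mul_of_nonneg_left (dInt_sum_le _ _) (by positivity)
    _ ≤ ∑ _k ∈ range (D + 1), 2 ^ D * (Q : ℝ) ^ (D - 1) * M := by
        rw [mul_sum]
        exact sum_le_sum fun k hk => pow_mul_dInt_choose_mul_coeff_le hM hM0 hj
          (Nat.lt_succ_iff.mp (mem_range.mp hk)) (by exact_mod_cast hQ) T.cast_nonneg haR hbR
    _ = _ := by rw [sum_const, card_range, nsmul_eq_mul]; push_cast; ring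
end
end
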